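/- For all real numbers s, t with 0 < s and t < −s, the x-ray 𝒳(s,t) does not satisfy the extension criterion: there exists a strictly convex cone compatible with 𝒳(s,t) that does not extend to any convex polytope compatible with 𝒳(s,t). -/

import Mathlib

open Set

noncomputable section

/-- We model `ℝ²` as `ℝ × ℝ`. -/
abbrev Pt : Type := ℝ × ℝ

/-- A (nonempty, compact) convex polytope in `ℝ²`: the convex hull of a
nonempty finite set of points. -/
def IsPolytope (S : Set Pt) : Prop :=
  ∃ F : Finset Pt, F.Nonempty ∧ S = convexHull ℝ (F : Set Pt)

/-- The dimension of a (convex) set: the dimension of its affine span. -/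
def setDim (S : Set Pt) : ℕ :=
  Module.finrank ℝ (affineSpan ℝ S).direction

/-- `σ` is a face of the convex set `Δ`: a nonempty convex extreme subset
(this includes `Δ` itself). -/
def IsFaceOf (σ Δ : Set Pt) : Prop :=
  σ.Nonempty ∧ Convex ℝ σ ∧ IsExtreme ℝ Δ σ

/-- A convex polytope `Δ` is compatible with the x-ray `𝒳`: one can choose,
for every face `σ` of `Δ`, an element `X σ ∈ 𝒳` with `dim (X σ) = dim σ` and
`σ ⊆ X σ`, monotonically in `σ`. -/
def PolyCompat (𝒳 : Set (Set Pt)) (Δ : Set Pt) : Prop :=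
  ∃ X : Set Pt → Set Pt,
    (∀ σ, IsFaceOf σ Δ → X σ ∈ 𝒳 ∧ setDim (X σ) = setDim σ ∧ σ ⊆ X σ) ∧
    (∀ σ σ', IsFaceOf σ Δ → IsFaceOf σ' Δ → σ ⊆ σ' → X σ ⊆ X σ')

/-- `C` is a closed convex cone with vertex `v`, i.e. `C = v + C₀` for a
closed convex cone `C₀` with apex `0`. -/
def IsConeWithVertex (C : Set Pt) (v : Pt) : Prop :=
  IsClosed C ∧ Convex ℝ C ∧ v ∈ C ∧
    ∀ x ∈ C, ∀ a : ℝ, 0 ≤ a → v + a • (x - v) ∈ C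

/-- A cone is strictly convex iff it contains no affine line. -/
def ContainsNoLine (C : Set Pt) : Prop :=
  ¬ ∃ p d : Pt, d ≠ 0 ∧ ∀ r : ℝ, p + r • d ∈ C

/-- A convex cone `C` with vertex `v` is compatible with the x-ray `𝒳`:
there is a neighborhood `U` of `v` such that one can choose, for every face
`σ` of `C`, an element `X σ ∈ 𝒳` with `dim (X σ) = dim σ` and
`σ ∩ U ⊆ X σ`, monotonically in `σ`. -/
def ConeCompat (𝒳 : Set (Set Pt)) (C : Set Pt) (v : Pt) : Prop :=
  ∃ U ∈ nhds v, ∃ X : Set Pt → Set Pt,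
    (∀ σ, IsFaceOf σ C → X σ ∈ 𝒳 ∧ setDim (X σ) = setDim σ ∧ σ ∩ U ⊆ X σ) ∧
    (∀ σ σ', IsFaceOf σ C → IsFaceOf σ' C → σ ⊆ σ' → X σ ⊆ X σ')

/-- A convex polytope `Δ` is an extension of the cone `C` with vertex `v`
if `C` and `Δ` agree near `v`. -/
def IsExtensionOf (Δ C : Set Pt) (v : Pt) : Prop :=
  ∃ U ∈ nhds v, C ∩ U = Δ ∩ U

/-- An x-ray satisfies the extension criterion if every compatible strictly
convex cone extends to a compatible convex polytope. -/
def ExtensionCriterion (𝒳 : Set (Set Pt)) : Prop :=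
  ∀ C : Set Pt, ∀ v : Pt, IsConeWithVertex C v → ContainsNoLine C →
    ConeCompat 𝒳 C v →
    ∃ Δ : Set Pt, IsPolytope Δ ∧ IsExtensionOf Δ C v ∧ PolyCompat 𝒳 Δ

/-- An x-ray: a finite collection of (nonempty, compact) convex polytopes. -/
def IsXRay (𝒳 : Set (Set Pt)) : Prop :=
  𝒳.Finite ∧ ∀ X ∈ 𝒳, IsPolytope X

/-- The parametrized x-ray `𝒳(s,t)` of Section 5 of the paper: the possible
x-rays of the manifold `M` for other invariant symplectic forms, determined
by the image `(s,t)` of the fixed point `F'`. -/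
def XrayST (s t : ℝ) : Set (Set Pt) :=
  { {((0, 0) : Pt)}, {((s + t, 0) : Pt)}, {((s, s) : Pt)}, {((t - s, s) : Pt)},
    {((0, t) : Pt)}, {((s, t) : Pt)},
    segment ℝ ((0, 0) : Pt) ((0, t) : Pt),
    segment ℝ ((0, 0) : Pt) ((s + t, 0) : Pt),
    segment ℝ ((0, t) : Pt) ((s, t) : Pt),
    segment ℝ ((s, t) : Pt) ((s + t, 0) : Pt),
    segment ℝ ((0, 0) : Pt) ((s, s) : Pt),
    segment ℝ ((s, s) : Pt) ((t - s, s) : Pt),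
    segment ℝ ((s, s) : Pt) ((s, t) : Pt),
    segment ℝ ((t - s, s) : Pt) ((s + t, 0) : Pt),
    segment ℝ ((t - s, s) : Pt) ((0, t) : Pt),
    convexHull ℝ {((0, 0) : Pt), ((s + t, 0) : Pt), ((s, s) : Pt),
      ((t - s, s) : Pt), ((0, t) : Pt), ((s, t) : Pt)} }


/-! ### Auxiliary lemmas -/

section Aux

lemma setDim_singleton' (p : Pt) : setDim {p} = 0 := by
  unfold setDim
  rw [direction_affineSpan, vectorSpan_singleton]
  exact finrank_bot ℝ Pt

lemma one_le_setDim' {S : Set Pt} {a b : Pt} (ha : a ∈ S) (hb : b ∈ S) (hab : a ≠ b) :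
    1 ≤ setDim S := by
  unfold setDim
  rw [direction_affineSpan]
  have h1 : Submodule.span ℝ {a - b} ≤ vectorSpan ℝ S := by
    rw [Submodule.span_le, singleton_subset_iff]
    exact vsub_mem_vectorSpan ℝ ha hb
  calc 1 = Module.finrank ℝ (Submodule.span ℝ {a - b}) :=
        (finrank_span_singleton (sub_ne_zero.2 hab)).symm
    _ ≤ _ := Submodule.finrank_mono h1

lemma setDim_le_one' {S : Set Pt} {v : Pt} (hv : v ≠ 0)
    (h : ∀ p ∈ S, ∀ q ∈ S, ∃ r : ℝ, p - q = r • v) : setDim S ≤ 1 := by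
  unfold setDim
  rw [direction_affineSpan]
  have h1 : vectorSpan ℝ S ≤ Submodule.span ℝ {v} := by
    rw [vectorSpan, Submodule.span_le]
    rintro x ⟨p, hp, q, hq, rfl⟩
    obtain ⟨r, hr⟩ := h p hp q hq
    rw [SetLike.mem_coe, Submodule.mem_span_singleton]
    exact ⟨r, by rw [← hr]; rfl⟩
  calc Module.finrank ℝ (vectorSpan ℝ S) ≤ Module.finrank ℝ (Submodule.span ℝ {v}) :=
        Submodule.finrank_mono h1
    _ = 1 := finrank_span_singleton hv

lemma finrank_Pt : Module.finrank ℝ Pt = 2 := by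
  simp [Module.finrank_prod]

lemma setDim_eq_two' {S : Set Pt} {p a b : Pt} (hp : p ∈ S) (ha : a ∈ S) (hb : b ∈ S)
    (hspan : ∀ z : Pt, ∃ c d : ℝ, c • (a - p) + d • (b - p) = z) : setDim S = 2 := by
  unfold setDim
  rw [direction_affineSpan]
  have h1 : (⊤ : Submodule ℝ Pt) ≤ vectorSpan ℝ S := by
    have hsub : Submodule.span ℝ {a - p, b - p} ≤ vectorSpan ℝ S := by
      rw [Submodule.span_le]
      rintro x hx
      rcases hx with rfl | rfl
      · exact vsub_mem_vectorSpan ℝ ha hp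
      · exact vsub_mem_vectorSpan ℝ hb hp
    intro z _
    apply hsub
    rw [Submodule.mem_span_pair]
    obtain ⟨c, d, h⟩ := hspan z
    exact ⟨c, d, h⟩
  have h2 : vectorSpan ℝ S = ⊤ := top_le_iff.1 h1
  rw [h2, finrank_top, finrank_Pt]

lemma setDim_segment' {a b : Pt} (hab : a ≠ b) : setDim (segment ℝ a b) = 1 := by
  have h1 : 1 ≤ setDim (segment ℝ a b) :=
    one_le_setDim' (left_mem_segment ℝ a b) (right_mem_segment ℝ a b) hab
  have h2 : setDim (segment ℝ a b) ≤ 1 := by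
    apply setDim_le_one' (v := b - a) (sub_ne_zero.2 hab.symm)
    rintro p ⟨u, u', hu, hu', huu, rfl⟩ q ⟨w, w', hw, hw', hww, rfl⟩
    refine ⟨u' - w', ?_⟩
    have h3 : u = 1 - u' := by linarith
    have hw2 : w = 1 - w' := by linarith
    subst h3; subst hw2
    module
  omega

lemma mem_hull3 {A B C : Pt} {a b c : ℝ} (ha : 0 ≤ a) (hb : 0 ≤ b) (hc : 0 ≤ c)
    (habc : a + b + c = 1) : a • A + b • B + c • C ∈ convexHull ℝ ({A, B, C} : Set Pt) := by
  have hA : A ∈ convexHull ℝ ({A, B, C} : Set Pt) := subset_convexHull _ _ (by simp)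
  have hB : B ∈ convexHull ℝ ({A, B, C} : Set Pt) := subset_convexHull _ _ (by simp)
  have hC : C ∈ convexHull ℝ ({A, B, C} : Set Pt) := subset_convexHull _ _ (by simp)
  have hconv := convex_convexHull ℝ ({A, B, C} : Set Pt)
  rcases eq_or_lt_of_le (by linarith : (0:ℝ) ≤ a + b) with h | h
  · have ha0 : a = 0 := by linarith
    have hb0 : b = 0 := by linarith
    have hc1 : c = 1 := by linarith
    simp [ha0, hb0, hc1, hC]
  · have hM : (a/(a+b)) • A + (b/(a+b)) • B ∈ convexHull ℝ ({A, B, C} : Set Pt) :=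
      hconv hA hB (by positivity) (by positivity) (by field_simp)
    have h2 := hconv hM hC (le_of_lt h) hc (by linarith)
    convert h2 using 1
    have hne : (a + b) ≠ 0 := ne_of_gt h
    rw [smul_add, smul_smul, smul_smul, mul_div_cancel₀ _ hne, mul_div_cancel₀ _ hne]

lemma seg_mem_coords {a1 a2 b1 b2 c1 c2 : ℝ} (h : ((c1,c2):Pt) ∈ segment ℝ (a1,a2) (b1,b2)) :
    ∃ u v : ℝ, 0 ≤ u ∧ 0 ≤ v ∧ u + v = 1 ∧ u*a1 + v*b1 = c1 ∧ u*a2 + v*b2 = c2 := by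
  obtain ⟨u,v,hu,hv,huv,heq⟩ := h
  simp only [Prod.smul_mk, Prod.mk_add_mk, Prod.mk.injEq, smul_eq_mul] at heq
  exact ⟨u,v,hu,hv,huv,heq.1,heq.2⟩

lemma seg_mem_intro {a1 a2 b1 b2 c1 c2 u v : ℝ} (hu : 0 ≤ u) (hv : 0 ≤ v) (huv : u+v=1)
    (h1 : u*a1+v*b1 = c1) (h2 : u*a2+v*b2=c2) : ((c1,c2):Pt) ∈ segment ℝ (a1,a2) (b1,b2) :=
  ⟨u,v,hu,hv,huv, by
    simp only [Prod.smul_mk, Prod.mk_add_mk, Prod.mk.injEq, smul_eq_mul]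
    exact ⟨h1, h2⟩⟩

lemma mem_ball_pt {p : Pt} {r : ℝ} (h1 : |p.1| < r) (h2 : |p.2| < r) :
    p ∈ Metric.ball (0:Pt) r := by
  rw [Metric.mem_ball, Prod.dist_eq]
  have e1 : dist p.1 (0:Pt).1 = |p.1| := by simp [Real.dist_eq]
  have e2 : dist p.2 (0:Pt).2 = |p.2| := by simp [Real.dist_eq]
  rw [e1, e2]
  exact max_lt h1 h2

lemma ball_pt_coords {p : Pt} {r : ℝ} (h : p ∈ Metric.ball (0:Pt) r) : |p.1| < r ∧ |p.2| < r := by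
  rw [Metric.mem_ball, Prod.dist_eq] at h
  have e1 : dist p.1 (0:Pt).1 = |p.1| := by simp [Real.dist_eq]
  have e2 : dist p.2 (0:Pt).2 = |p.2| := by simp [Real.dist_eq]
  rw [e1, e2] at h
  exact ⟨lt_of_le_of_lt (le_max_left _ _) h, lt_of_le_of_lt (le_max_right _ _) h⟩

/-- The third-quadrant cone. -/
def Cq : Set Pt := {p | p.1 ≤ 0 ∧ p.2 ≤ 0}
/-- Its horizontal edge. -/
def Rx : Set Pt := {p | p.1 ≤ 0 ∧ p.2 = 0}
/-- Its vertical edge. -/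
def Ry : Set Pt := {p | p.1 = 0 ∧ p.2 ≤ 0}

lemma extreme_pull {D σ : Set Pt} (hext : IsExtreme ℝ D σ) {w z : Pt} (hw : w ∈ σ)
    (hz : z ∈ D) {ε : ℝ} (hε : 0 < ε) (hu : w + ε • (w - z) ∈ D) : z ∈ σ := by
  have hne : (1 + ε) ≠ 0 := by positivity
  have hmem : w ∈ openSegment ℝ z (w + ε • (w - z)) := by
    refine ⟨ε / (1 + ε), 1 / (1 + ε), by positivity, by positivity, ?_, ?_⟩
    · field_simp; ring
    · have key : (ε • z + (1:ℝ) • (w + ε • (w - z))) = (1+ε) • w := by module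
      calc (ε/(1+ε)) • z + (1/(1+ε)) • (w + ε • (w - z))
          = (1+ε)⁻¹ • (ε • z + (1:ℝ) • (w + ε • (w - z))) := by
            rw [div_eq_inv_mul, div_eq_inv_mul, mul_smul, mul_smul, ← smul_add]
        _ = w := by rw [key, inv_smul_smul₀ hne]
  exact hext.2 hz hu hw hmem

lemma face_classify {σ : Set Pt} (hf : IsFaceOf σ Cq) :
    σ = {(0,0)} ∨ σ = Rx ∨ σ = Ry ∨ σ = Cq := by
  obtain ⟨hne, hconv, hext⟩ := hf
  have hsub : σ ⊆ Cq := hext.1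
  by_cases h1 : ∃ w ∈ σ, w.1 < 0 ∧ w.2 < 0
  · obtain ⟨w, hw, hw1, hw2⟩ := h1
    right; right; right
    refine Subset.antisymm hsub fun z hz => ?_
    have hz1 : z.1 ≤ 0 := hz.1
    have hz2 : z.2 ≤ 0 := hz.2
    set ε : ℝ := min ((-w.1)/(1 + (-z.1))) ((-w.2)/(1 + (-z.2))) with hεdef
    have hd1 : (0:ℝ) < 1 + (-z.1) := by linarith
    have hd2 : (0:ℝ) < 1 + (-z.2) := by linarith
    have hε : 0 < ε := lt_min (div_pos (by linarith) hd1) (div_pos (by linarith) hd2)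
    refine extreme_pull hext hw hz hε ⟨?_, ?_⟩
    · have hle : ε ≤ (-w.1)/(1 + (-z.1)) := min_le_left _ _
      have : ε * (1 + (-z.1)) ≤ -w.1 := by
        rw [← le_div_iff₀ hd1]; exact hle
      show w.1 + ε * (w.1 - z.1) ≤ 0
      nlinarith [hε.le]
    · have hle : ε ≤ (-w.2)/(1 + (-z.2)) := min_le_right _ _
      have : ε * (1 + (-z.2)) ≤ -w.2 := by
        rw [← le_div_iff₀ hd2]; exact hle
      show w.2 + ε * (w.2 - z.2) ≤ 0
      nlinarith [hε.le]
  · push_neg at h1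
    have hbd : ∀ w ∈ σ, w.1 = 0 ∨ w.2 = 0 := by
      intro w hw
      rcases lt_or_eq_of_le (hsub hw).1 with h | h
      · exact Or.inr (by have := h1 w hw h; linarith [(hsub hw).2])
      · exact Or.inl h
    by_cases h2 : ∃ w ∈ σ, w.1 < 0
    · obtain ⟨w, hw, hw1⟩ := h2
      have hw2 : w.2 = 0 := by
        rcases hbd w hw with h | h
        · exact absurd h (ne_of_lt hw1)
        · exact h
      right; left
      refine Subset.antisymm ?_ ?_
      · intro u hu
        rcases hbd u hu with h | h
        · rcases lt_or_eq_of_le (hsub hu).2 with h' | h'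
          · exfalso
            have hmid : (1/2 : ℝ) • w + (1/2 : ℝ) • u ∈ σ :=
              hconv hw hu (by norm_num) (by norm_num) (by norm_num)
            have := h1 _ hmid
            simp only [Prod.fst_add, Prod.snd_add, Prod.smul_fst, Prod.smul_snd,
              smul_eq_mul] at this
            have hc1 : (1/2 : ℝ) * w.1 + (1/2 : ℝ) * u.1 < 0 := by
              rw [h]; linarith
            have hc2 := this hc1
            rw [hw2] at hc2
            linarith
          · exact ⟨(hsub hu).1, h'⟩
        · exact ⟨(hsub hu).1, h⟩
      · rintro ⟨z1, z2⟩ ⟨hz1, hz2⟩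
        simp only at hz1 hz2; subst hz2
        have hz : ((z1, 0) : Pt) ∈ Cq := ⟨hz1, le_refl 0⟩
        have hd1 : (0:ℝ) < 1 + (-z1) := by linarith
        set ε : ℝ := (-w.1)/(1 + (-z1)) with hεdef
        have hε : 0 < ε := div_pos (by linarith) hd1
        refine extreme_pull hext hw hz hε ⟨?_, ?_⟩
        · have : ε * (1 + (-z1)) ≤ -w.1 := by
            rw [← le_div_iff₀ hd1]
          show w.1 + ε * (w.1 - z1) ≤ 0
          nlinarith [hε.le]
        · show w.2 + ε * (w.2 - 0) ≤ 0
          rw [hw2]; ring_nf; exact le_refl 0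
    · push_neg at h2
      have hx0 : ∀ w ∈ σ, w.1 = 0 := by
        intro w hw
        exact le_antisymm (hsub hw).1 (h2 w hw)
      by_cases h3 : ∃ w ∈ σ, w.2 < 0
      · obtain ⟨w, hw, hw2⟩ := h3
        right; right; left
        refine Subset.antisymm (fun u hu => ⟨hx0 u hu, (hsub hu).2⟩) ?_
        rintro ⟨z1, z2⟩ ⟨hz1, hz2⟩
        simp only at hz1 hz2; subst hz1
        have hz : ((0, z2) : Pt) ∈ Cq := ⟨le_refl 0, hz2⟩
        have hd2 : (0:ℝ) < 1 + (-z2) := by linarith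
        set ε : ℝ := (-w.2)/(1 + (-z2)) with hεdef
        have hε : 0 < ε := div_pos (by linarith) hd2
        refine extreme_pull hext hw hz hε ⟨?_, ?_⟩
        · show w.1 + ε * (w.1 - 0) ≤ 0
          rw [hx0 w hw]; ring_nf; exact le_refl 0
        · have : ε * (1 + (-z2)) ≤ -w.2 := by
            rw [← le_div_iff₀ hd2]
          show w.2 + ε * (w.2 - z2) ≤ 0
          nlinarith [hε.le]
      · push_neg at h3
        left
        refine Subset.antisymm ?_ ?_
        · intro w hw
          have h1' := hx0 w hw
          have h2' := le_antisymm (hsub hw).2 (h3 w hw)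
          simp only [mem_singleton_iff]
          exact Prod.ext h1' h2'
        · obtain ⟨w, hw⟩ := hne
          have h1' := hx0 w hw
          have h2' := le_antisymm (hsub hw).2 (h3 w hw)
          have h4 : w = ((0,0) : Pt) := Prod.ext h1' h2'
          rw [← h4]
          exact singleton_subset_iff.2 hw

end Aux


section Main

lemma sub_eq_smul_pt {p q : Pt} {v1 v2 r : ℝ} (h1 : p.1 - q.1 = r * v1)
    (h2 : p.2 - q.2 = r * v2) : p - q = r • ((v1,v2):Pt) := by
  have h3 : r • ((v1,v2):Pt) = (r*v1, r*v2) := rfl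
  rw [h3]
  exact Prod.ext h1 h2

lemma cone_vertex : IsConeWithVertex Cq ((0,0):Pt) := by
  refine ⟨?_, ?_, ⟨le_refl 0, le_refl 0⟩, ?_⟩
  · exact (isClosed_le continuous_fst continuous_const).inter
      (isClosed_le continuous_snd continuous_const)
  · intro x hx y hy u v hu hv huv
    constructor
    · have e1 : (u • x + v • y).1 = u * x.1 + v * y.1 := rfl
      rw [e1]; nlinarith [hx.1, hy.1]
    · have e2 : (u • x + v • y).2 = u * x.2 + v * y.2 := rfl
      rw [e2]; nlinarith [hx.2, hy.2]
  · intro x hx u hu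
    constructor
    · show (0:ℝ) + u * (x.1 - 0) ≤ 0
      nlinarith [hx.1]
    · show (0:ℝ) + u * (x.2 - 0) ≤ 0
      nlinarith [hx.2]

lemma cone_noline : ContainsNoLine Cq := by
  rintro ⟨p, d, hd, h⟩
  have h1 : d.1 = 0 := by
    by_contra hd1
    have h2 := (h ((1 - p.1)/d.1)).1
    have e1 : (p + ((1 - p.1)/d.1) • d).1 = p.1 + (1 - p.1)/d.1 * d.1 := rfl
    rw [e1, div_mul_cancel₀ _ hd1] at h2
    linarith
  have h2 : d.2 = 0 := by
    by_contra hd2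
    have h3 := (h ((1 - p.2)/d.2)).2
    have e2 : (p + ((1 - p.2)/d.2) • d).2 = p.2 + (1 - p.2)/d.2 * d.2 := rfl
    rw [e2, div_mul_cancel₀ _ hd2] at h3
    linarith
  exact hd (Prod.ext h1 h2)

lemma setDim_Rx : setDim Rx = 1 := by
  have hmx : ((-1,0):Pt) ∈ Rx := ⟨by norm_num, rfl⟩
  have h0 : ((0,0):Pt) ∈ Rx := ⟨le_refl 0, rfl⟩
  have h1 : 1 ≤ setDim Rx := one_le_setDim' h0 hmx (by
    intro h; have h2 : (0:ℝ) = -1 := congrArg Prod.fst h; norm_num at h2)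
  have h2 : setDim Rx ≤ 1 := by
    apply setDim_le_one' (v := ((1,0):Pt)) (by
      intro h; have h3 : (1:ℝ) = 0 := congrArg Prod.fst h; norm_num at h3)
    intro p hp q hq
    refine ⟨p.1 - q.1, sub_eq_smul_pt (by ring) ?_⟩
    rw [hp.2, hq.2]; ring
  omega

lemma setDim_Ry : setDim Ry = 1 := by
  have hmy : ((0,-1):Pt) ∈ Ry := ⟨rfl, by norm_num⟩
  have h0 : ((0,0):Pt) ∈ Ry := ⟨rfl, le_refl 0⟩
  have h1 : 1 ≤ setDim Ry := one_le_setDim' h0 hmy (by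
    intro h; have h2 : (0:ℝ) = -1 := congrArg Prod.snd h; norm_num at h2)
  have h2 : setDim Ry ≤ 1 := by
    apply setDim_le_one' (v := ((0,1):Pt)) (by
      intro h; have h3 : (1:ℝ) = 0 := congrArg Prod.snd h; norm_num at h3)
    intro p hp q hq
    refine ⟨p.2 - q.2, sub_eq_smul_pt ?_ (by ring)⟩
    rw [hp.1, hq.1]; ring
  omega

lemma setDim_Cq : setDim Cq = 2 := by
  have m0 : ((0,0):Pt) ∈ Cq := ⟨le_refl 0, le_refl 0⟩
  have m1 : ((-1,0):Pt) ∈ Cq := ⟨by norm_num, le_refl 0⟩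
  have m2 : ((0,-1):Pt) ∈ Cq := ⟨le_refl 0, by norm_num⟩
  apply setDim_eq_two' m0 m1 m2
  intro z
  refine ⟨-z.1, -z.2, ?_⟩
  have e1 : ((-1,0):Pt) - (0,0) = ((-1,0):Pt) := by norm_num
  have e2 : ((0,-1):Pt) - (0,0) = ((0,-1):Pt) := by norm_num
  rw [e1, e2]
  apply Prod.ext
  · show -z.1 * (-1) + -z.2 * 0 = z.1
    ring
  · show -z.1 * 0 + -z.2 * (-1) = z.2
    ring

lemma setDim_P {s t : ℝ} (hs : 0 < s) (ht0 : t < 0) :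
    setDim (convexHull ℝ ({((0, 0) : Pt), ((s + t, 0) : Pt), ((s, s) : Pt),
      ((t - s, s) : Pt), ((0, t) : Pt), ((s, t) : Pt)} : Set Pt)) = 2 := by
  apply setDim_eq_two' (p := ((0,0):Pt)) (a := ((s,s):Pt)) (b := ((0,t):Pt))
    (subset_convexHull _ _ (by simp)) (subset_convexHull _ _ (by simp))
    (subset_convexHull _ _ (by simp))
  intro z
  refine ⟨z.1/s, (z.2 - z.1)/t, ?_⟩
  have e1 : ((s,s):Pt) - (0,0) = ((s,s):Pt) := by norm_num
  have e2 : ((0,t):Pt) - (0,0) = ((0,t):Pt) := by norm_num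
  rw [e1, e2]
  apply Prod.ext
  · show z.1/s * s + (z.2 - z.1)/t * 0 = z.1
    rw [div_mul_cancel₀ _ (ne_of_gt hs)]; ring
  · show z.1/s * s + (z.2 - z.1)/t * t = z.2
    rw [div_mul_cancel₀ _ (ne_of_gt hs), div_mul_cancel₀ _ (ne_of_lt ht0)]; ring

lemma cone_compat (s t : ℝ) (hs : 0 < s) (ht : t < -s) :
    ConeCompat (XrayST s t) Cq ((0,0):Pt) := by
  classical
  have hst : s + t < 0 := by linarith
  have ht0 : t < 0 := by linarith
  set P6 : Set Pt := {((0, 0) : Pt), ((s + t, 0) : Pt), ((s, s) : Pt),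
    ((t - s, s) : Pt), ((0, t) : Pt), ((s, t) : Pt)} with hP6
  set r : ℝ := min (-(s+t)) (-t) / 2 with hrdef
  have hr0 : 0 < r := by
    apply div_pos _ two_pos
    exact lt_min (by linarith) (by linarith)
  have hrx : r ≤ -(s+t)/2 := by
    have := min_le_left (-(s+t)) (-t); rw [hrdef]; linarith
  have hry : r ≤ -t/2 := by
    have := min_le_right (-(s+t)) (-t); rw [hrdef]; linarith
  -- membership of the chosen sets in the x-ray
  have hX0 : ({((0,0):Pt)} : Set Pt) ∈ XrayST s t := by
    simp only [XrayST, mem_insert_iff, mem_singleton_iff]; tauto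
  have hXx : segment ℝ ((0,0):Pt) ((s+t,0):Pt) ∈ XrayST s t := by
    simp only [XrayST, mem_insert_iff, mem_singleton_iff]; tauto
  have hXy : segment ℝ ((0,0):Pt) ((0,t):Pt) ∈ XrayST s t := by
    simp only [XrayST, mem_insert_iff, mem_singleton_iff]; tauto
  have hXP : convexHull ℝ P6 ∈ XrayST s t := by
    simp only [XrayST, mem_insert_iff, mem_singleton_iff, hP6]; tauto
  -- distinctness of the four faces
  have hmx : ((-1,0):Pt) ∈ Rx := ⟨by norm_num, rfl⟩
  have hmy : ((0,-1):Pt) ∈ Ry := ⟨rfl, by norm_num⟩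
  have hmc : ((-1,-1):Pt) ∈ Cq := ⟨by norm_num, by norm_num⟩
  have hne1 : Rx ≠ ({((0,0):Pt)} : Set Pt) := by
    intro h; rw [h, mem_singleton_iff] at hmx
    have h2 : (-1:ℝ) = 0 := congrArg Prod.fst hmx; norm_num at h2
  have hne2 : Ry ≠ ({((0,0):Pt)} : Set Pt) := by
    intro h; rw [h, mem_singleton_iff] at hmy
    have h2 : (-1:ℝ) = 0 := congrArg Prod.snd hmy; norm_num at h2
  have hne3 : Ry ≠ Rx := by
    intro h; rw [h] at hmy
    have h2 : (-1:ℝ) = 0 := hmy.2; norm_num at h2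
  have hne4 : Cq ≠ ({((0,0):Pt)} : Set Pt) := by
    intro h; rw [h, mem_singleton_iff] at hmc
    have h2 : (-1:ℝ) = 0 := congrArg Prod.fst hmc; norm_num at h2
  have hne5 : Cq ≠ Rx := by
    intro h; rw [h] at hmc
    have h2 : (-1:ℝ) = 0 := hmc.2; norm_num at h2
  have hne6 : Cq ≠ Ry := by
    intro h; rw [h] at hmc
    have h2 : (-1:ℝ) = 0 := hmc.1; norm_num at h2
  -- distinct endpoints for the segments
  have np2 : ((0,0):Pt) ≠ ((s+t,0):Pt) := by
    intro h; have h2 : (0:ℝ) = s+t := congrArg Prod.fst h; linarith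
  have np1 : ((0,0):Pt) ≠ ((0,t):Pt) := by
    intro h; have h2 : (0:ℝ) = t := congrArg Prod.snd h; linarith
  set Xf : Set Pt → Set Pt := fun σ =>
    if σ = ({((0,0):Pt)} : Set Pt) then ({((0,0):Pt)} : Set Pt)
    else if σ = Rx then segment ℝ ((0,0):Pt) ((s+t,0):Pt)
    else if σ = Ry then segment ℝ ((0,0):Pt) ((0,t):Pt)
    else convexHull ℝ P6 with hXf
  have e0 : Xf ({((0,0):Pt)} : Set Pt) = ({((0,0):Pt)} : Set Pt) := if_pos rfl
  have ex : Xf Rx = segment ℝ ((0,0):Pt) ((s+t,0):Pt) :=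
    (if_neg hne1).trans (if_pos rfl)
  have ey : Xf Ry = segment ℝ ((0,0):Pt) ((0,t):Pt) :=
    (if_neg hne2).trans ((if_neg hne3).trans (if_pos rfl))
  have ec : Xf Cq = convexHull ℝ P6 :=
    (if_neg hne4).trans ((if_neg hne5).trans (if_neg hne6))
  have hsub3 : ({((0,0):Pt), ((s+t,0):Pt), ((0,t):Pt)} : Set Pt) ⊆ P6 := by
    intro x hx
    simp only [mem_insert_iff, mem_singleton_iff, hP6] at hx ⊢
    tauto
  refine ⟨Metric.ball (0:Pt) r, Metric.ball_mem_nhds _ hr0, Xf, ?_, ?_⟩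
  · intro σ hσ
    rcases face_classify hσ with rfl | rfl | rfl | rfl
    · rw [e0]
      exact ⟨hX0, rfl, inter_subset_left⟩
    · rw [ex]
      refine ⟨hXx, by rw [setDim_segment' np2, setDim_Rx], ?_⟩
      rintro p ⟨hp, hpU⟩
      obtain ⟨h1, h2⟩ := ball_pt_coords hpU
      have hp1 : s + t < p.1 := by
        have := (abs_lt.1 h1).1; linarith
      have hv0 : 0 ≤ p.1/(s+t) := by
        rw [le_div_iff_of_neg hst]; nlinarith [hp.1]
      have hv1 : p.1/(s+t) ≤ 1 := by
        rw [div_le_iff_of_neg hst]; nlinarith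
      have hmm := seg_mem_intro (a1:=0) (a2:=0) (b1:=s+t) (b2:=0) (c1:=p.1) (c2:=p.2)
        (u := 1 - p.1/(s+t)) (v := p.1/(s+t)) (by linarith) hv0 (by ring)
        (by rw [div_mul_cancel₀ _ (ne_of_lt hst)]; ring) (by rw [hp.2]; ring)
      rwa [Prod.mk.eta] at hmm
    · rw [ey]
      refine ⟨hXy, by rw [setDim_segment' np1, setDim_Ry], ?_⟩
      rintro p ⟨hp, hpU⟩
      obtain ⟨h1, h2⟩ := ball_pt_coords hpU
      have hp2 : t < p.2 := by
        have := (abs_lt.1 h2).1; linarith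
      have hv0 : 0 ≤ p.2/t := by
        rw [le_div_iff_of_neg ht0]; nlinarith [hp.2]
      have hv1 : p.2/t ≤ 1 := by
        rw [div_le_iff_of_neg ht0]; nlinarith
      have hmm := seg_mem_intro (a1:=0) (a2:=0) (b1:=0) (b2:=t) (c1:=p.1) (c2:=p.2)
        (u := 1 - p.2/t) (v := p.2/t) (by linarith) hv0 (by ring)
        (by rw [hp.1]; ring) (by rw [div_mul_cancel₀ _ (ne_of_lt ht0)]; ring)
      rwa [Prod.mk.eta] at hmm
    · rw [ec]
      refine ⟨hXP, by rw [setDim_P hs ht0, setDim_Cq], ?_⟩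
      rintro p ⟨hp, hpU⟩
      obtain ⟨h1, h2⟩ := ball_pt_coords hpU
      have hb0 : 0 ≤ p.1/(s+t) := by
        rw [le_div_iff_of_neg hst]; nlinarith [hp.1]
      have hc0 : 0 ≤ p.2/t := by
        rw [le_div_iff_of_neg ht0]; nlinarith [hp.2]
      have hb1 : p.1/(s+t) ≤ 1/2 := by
        rw [div_le_iff_of_neg hst]
        have := (abs_lt.1 h1).1; nlinarith
      have hc1 : p.2/t ≤ 1/2 := by
        rw [div_le_iff_of_neg ht0]
        have := (abs_lt.1 h2).1; nlinarith
      have key := mem_hull3 (A := ((0,0):Pt)) (B := ((s+t,0):Pt)) (C := ((0,t):Pt))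
        (a := 1 - p.1/(s+t) - p.2/t) (b := p.1/(s+t)) (c := p.2/t)
        (by linarith) hb0 hc0 (by ring)
      have hcombo : (1 - p.1/(s+t) - p.2/t) • ((0,0):Pt) + (p.1/(s+t)) • ((s+t,0):Pt)
          + (p.2/t) • ((0,t):Pt) = p := by
        apply Prod.ext
        · show (1 - p.1/(s+t) - p.2/t) * 0 + (p.1/(s+t)) * (s+t) + (p.2/t) * 0 = p.1
          rw [div_mul_cancel₀ _ (ne_of_lt hst)]; ring
        · show (1 - p.1/(s+t) - p.2/t) * 0 + (p.1/(s+t)) * 0 + (p.2/t) * t = p.2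
          rw [div_mul_cancel₀ _ (ne_of_lt ht0)]; ring
      rw [hcombo] at key
      exact convexHull_mono hsub3 key
  · intro σ σ' hσ hσ' hss
    have hm0 : ((0,0):Pt) ∈ P6 := by simp [hP6]
    rcases face_classify hσ with rfl | rfl | rfl | rfl <;>
      rcases face_classify hσ' with rfl | rfl | rfl | rfl
    · exact subset_rfl
    · rw [e0, ex]; exact singleton_subset_iff.2 (left_mem_segment ℝ _ _)
    · rw [e0, ey]; exact singleton_subset_iff.2 (left_mem_segment ℝ _ _)
    · rw [e0, ec]; exact singleton_subset_iff.2 (subset_convexHull ℝ _ hm0)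
    · exfalso; have := hss hmx
      rw [mem_singleton_iff] at this
      have h2 : (-1:ℝ) = 0 := congrArg Prod.fst this; norm_num at h2
    · exact subset_rfl
    · exfalso; have := hss hmx
      have h2 : (-1:ℝ) = 0 := this.1; norm_num at h2
    · rw [ex, ec, ← convexHull_pair]
      exact convexHull_mono (fun x hx => hsub3 (by
        simp only [mem_insert_iff, mem_singleton_iff] at hx ⊢; tauto))
    · exfalso; have := hss hmy
      rw [mem_singleton_iff] at this
      have h2 : (-1:ℝ) = 0 := congrArg Prod.snd this; norm_num at h2
    · exfalso; have := hss hmy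
      have h2 : (-1:ℝ) = 0 := this.2; norm_num at h2
    · exact subset_rfl
    · rw [ey, ec, ← convexHull_pair]
      exact convexHull_mono (fun x hx => hsub3 (by
        simp only [mem_insert_iff, mem_singleton_iff] at hx ⊢; tauto))
    · exfalso; have := hss hmc
      rw [mem_singleton_iff] at this
      have h2 : (-1:ℝ) = 0 := congrArg Prod.fst this; norm_num at h2
    · exfalso; have := hss hmc
      have h2 : (-1:ℝ) = 0 := this.2; norm_num at h2
    · exfalso; have := hss hmc
      have h2 : (-1:ℝ) = 0 := this.1; norm_num at h2
    · exact subset_rfl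


end Main

set_option maxHeartbeats 2000000 in
lemma no_compat_ext (s t : ℝ) (hs : 0 < s) (ht : t < -s) (Δ : Set Pt)
    (hpoly : IsPolytope Δ) (hext : IsExtensionOf Δ Cq ((0,0):Pt)) :
    ¬ PolyCompat (XrayST s t) Δ := by
  classical
  have hst : s + t < 0 := by linarith
  have ht0 : t < 0 := by linarith
  rintro ⟨X, hX, hmono⟩
  obtain ⟨F, hFne, hFeq⟩ := hpoly
  have hΔconv : Convex ℝ Δ := by rw [hFeq]; exact convex_convexHull ℝ _
  have hΔcomp : IsCompact Δ := by
    rw [hFeq]; exact Set.Finite.isCompact_convexHull ℝ (F.finite_toSet)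
  obtain ⟨U, hU, hCU⟩ := hext
  obtain ⟨ε, hε0, hball⟩ := Metric.mem_nhds_iff.1 hU
  have h0U : ((0,0):Pt) ∈ U := mem_of_mem_nhds hU
  have h0Δ : ((0,0):Pt) ∈ Δ := by
    have hm : ((0,0):Pt) ∈ Cq ∩ U := ⟨⟨le_refl 0, le_refl 0⟩, h0U⟩
    rw [hCU] at hm; exact hm.1
  set a : ℝ := ε/2 with hadef
  have ha0 : 0 < a := by positivity
  have hya : ((0,-a):Pt) ∈ Δ := by
    have hm : ((0,-a):Pt) ∈ Cq ∩ U := by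
      refine ⟨⟨le_refl 0, show (-a:ℝ) ≤ 0 by linarith⟩, hball (mem_ball_pt ?_ ?_)⟩
      · show |(0:ℝ)| < ε; simpa using hε0
      · show |(-a)| < ε; rw [abs_neg, abs_of_pos ha0]; linarith
    rw [hCU] at hm; exact hm.1
  have hxa : ((-a,0):Pt) ∈ Δ := by
    have hm : ((-a,0):Pt) ∈ Cq ∩ U := by
      refine ⟨⟨show (-a:ℝ) ≤ 0 by linarith, le_refl 0⟩, hball (mem_ball_pt ?_ ?_)⟩
      · show |(-a)| < ε; rw [abs_neg, abs_of_pos ha0]; linarith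
      · show |(0:ℝ)| < ε; simpa using hε0
    rw [hCU] at hm; exact hm.1
  -- Δ lies in the third quadrant
  have hΔQ : ∀ w ∈ Δ, w ∈ Cq := by
    intro w hw
    have key : ∀ δ : ℝ, 0 < δ → δ ≤ 1 → δ * ‖w‖ < ε → δ • w ∈ Cq := by
      intro δ hδ0 hδ1 hδε
      have hmem : δ • w ∈ Δ := by
        have hc := hΔconv h0Δ hw (by linarith : (0:ℝ) ≤ 1 - δ) hδ0.le (by ring)
        have he : (1 - δ) • ((0,0):Pt) + δ • w = δ • w := by
          have hz : ((0,0):Pt) = 0 := rfl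
          rw [hz, smul_zero, zero_add]
        rwa [he] at hc
      have hmm : δ • w ∈ Δ ∩ U := by
        refine ⟨hmem, hball ?_⟩
        show δ • w ∈ Metric.ball (0:Pt) ε
        rw [mem_ball_zero_iff, norm_smul, Real.norm_eq_abs, abs_of_pos hδ0]
        exact hδε
      rw [← hCU] at hmm
      exact hmm.1
    set δ : ℝ := min 1 (ε/(2*(‖w‖+1))) with hδdef
    have hn0 : (0:ℝ) ≤ ‖w‖ := norm_nonneg w
    have hδ0 : 0 < δ := lt_min one_pos (by positivity)
    have hδ1 : δ ≤ 1 := min_le_left _ _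
    have hδ2 : δ ≤ ε/(2*(‖w‖+1)) := min_le_right _ _
    have hδε : δ * ‖w‖ < ε := by
      have h1 : δ * ‖w‖ ≤ (ε/(2*(‖w‖+1))) * ‖w‖ := by nlinarith
      have h2 : (ε/(2*(‖w‖+1))) * ‖w‖ < ε := by
        rw [div_mul_eq_mul_div, div_lt_iff₀ (by positivity)]
        nlinarith
      linarith
    have hc := key δ hδ0 hδ1 hδε
    have hc1 : δ * w.1 ≤ 0 := hc.1
    have hc2 : δ * w.2 ≤ 0 := hc.2
    constructor
    · nlinarith
    · nlinarith
  have hΔ1 : ∀ w ∈ Δ, w.1 ≤ 0 := fun w hw => (hΔQ w hw).1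
  have hΔ2 : ∀ w ∈ Δ, w.2 ≤ 0 := fun w hw => (hΔQ w hw).2
  -- every extreme point of Δ is one of three points
  have hdP := setDim_P hs ht0
  have hextreme : ∀ w, w ∈ Δ.extremePoints ℝ →
      w = ((0,0):Pt) ∨ w = ((s+t,0):Pt) ∨ w = ((0,t):Pt) := by
    intro w hw
    have hface : IsFaceOf {w} Δ :=
      ⟨singleton_nonempty _, convex_singleton _, isExtreme_singleton.2 hw⟩
    obtain ⟨hmem, hdim, hsubX⟩ := hX _ hface
    rw [setDim_singleton'] at hdim
    have hwX : w ∈ X {w} := hsubX rfl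
    have hw1 := hΔ1 w hw.1
    have hw2 := hΔ2 w hw.1
    simp only [XrayST, mem_insert_iff, mem_singleton_iff] at hmem
    have np1 : ((0,0):Pt) ≠ ((0,t):Pt) := by
      intro h; have h2 : (0:ℝ) = t := congrArg Prod.snd h; linarith
    have np2 : ((0,0):Pt) ≠ ((s+t,0):Pt) := by
      intro h; have h2 : (0:ℝ) = s+t := congrArg Prod.fst h; linarith
    have np3 : ((0,t):Pt) ≠ ((s,t):Pt) := by
      intro h; have h2 : (0:ℝ) = s := congrArg Prod.fst h; linarith
    have np4 : ((s,t):Pt) ≠ ((s+t,0):Pt) := by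
      intro h; have h2 : t = (0:ℝ) := congrArg Prod.snd h; linarith
    have np5 : ((0,0):Pt) ≠ ((s,s):Pt) := by
      intro h; have h2 : (0:ℝ) = s := congrArg Prod.fst h; linarith
    have np6 : ((s,s):Pt) ≠ ((t-s,s):Pt) := by
      intro h; have h2 : s = t-s := congrArg Prod.fst h; linarith
    have np7 : ((s,s):Pt) ≠ ((s,t):Pt) := by
      intro h; have h2 : s = t := congrArg Prod.snd h; linarith
    have np8 : ((t-s,s):Pt) ≠ ((s+t,0):Pt) := by
      intro h; have h2 : s = (0:ℝ) := congrArg Prod.snd h; linarith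
    have np9 : ((t-s,s):Pt) ≠ ((0,t):Pt) := by
      intro h; have h2 : t-s = (0:ℝ) := congrArg Prod.fst h; linarith
    rcases hmem with h|h|h|h|h|h|h|h|h|h|h|h|h|h|h|h
    · left; rw [h, mem_singleton_iff] at hwX; exact hwX
    · right; left; rw [h, mem_singleton_iff] at hwX; exact hwX
    · exfalso; rw [h, mem_singleton_iff] at hwX
      rw [hwX] at hw1; have h2 : s ≤ 0 := hw1; linarith
    · exfalso; rw [h, mem_singleton_iff] at hwX
      rw [hwX] at hw2; have h2 : s ≤ 0 := hw2; linarith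
    · right; right; rw [h, mem_singleton_iff] at hwX; exact hwX
    · exfalso; rw [h, mem_singleton_iff] at hwX
      rw [hwX] at hw1; have h2 : s ≤ 0 := hw1; linarith
    · rw [h, setDim_segment' np1] at hdim; exact absurd hdim one_ne_zero
    · rw [h, setDim_segment' np2] at hdim; exact absurd hdim one_ne_zero
    · rw [h, setDim_segment' np3] at hdim; exact absurd hdim one_ne_zero
    · rw [h, setDim_segment' np4] at hdim; exact absurd hdim one_ne_zero
    · rw [h, setDim_segment' np5] at hdim; exact absurd hdim one_ne_zero
    · rw [h, setDim_segment' np6] at hdim; exact absurd hdim one_ne_zero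
    · rw [h, setDim_segment' np7] at hdim; exact absurd hdim one_ne_zero
    · rw [h, setDim_segment' np8] at hdim; exact absurd hdim one_ne_zero
    · rw [h, setDim_segment' np9] at hdim; exact absurd hdim one_ne_zero
    · rw [h, hdP] at hdim; exact absurd hdim (by norm_num)
  -- the two extra vertices
  have hyt : ((0,t):Pt) ∈ Δ := by
    have hσext : IsExtreme ℝ Δ (Δ ∩ {p : Pt | p.1 = 0}) := by
      refine ⟨inter_subset_left, ?_⟩
      rintro x1 hx1 x2 hx2 z ⟨hzΔ, hz1⟩ ⟨u, v, hu, hv, huv, heq⟩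
      have e1 : u * x1.1 + v * x2.1 = z.1 := by
        have h3 := congrArg Prod.fst heq
        simpa [Prod.fst_add, Prod.smul_fst] using h3
      have hx11 := hΔ1 x1 hx1
      have hx21 := hΔ1 x2 hx2
      have hz1' : z.1 = 0 := hz1
      have hq1 : x1.1 = 0 := le_antisymm hx11 (by
        by_contra hc; push_neg at hc
        have h1 : u*x1.1 < 0 := mul_neg_of_pos_of_neg hu hc
        have h2 : v*x2.1 ≤ 0 := by nlinarith [mul_nonneg hv.le (neg_nonneg.2 hx21)]
        linarith)
      have hq2 : x2.1 = 0 := le_antisymm hx21 (by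
        by_contra hc; push_neg at hc
        have h1 : v*x2.1 < 0 := mul_neg_of_pos_of_neg hv hc
        have h2 : u*x1.1 ≤ 0 := by nlinarith [mul_nonneg hu.le (neg_nonneg.2 hx11)]
        linarith)
      exact ⟨hx1, hq1⟩
    have hσcomp : IsCompact (Δ ∩ {p : Pt | p.1 = 0}) :=
      hΔcomp.inter_right (isClosed_eq continuous_fst continuous_const)
    have hmσ : ((0,-a):Pt) ∈ Δ ∩ {p : Pt | p.1 = 0} := ⟨hya, rfl⟩
    obtain ⟨w, hwσ, hwmin⟩ := hσcomp.exists_isMinOn ⟨_, hmσ⟩ continuous_snd.continuousOn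
    have hwmin' := isMinOn_iff.1 hwmin
    have hwext : w ∈ Δ.extremePoints ℝ := by
      refine ⟨hwσ.1, ?_⟩
      intro x1 hx1 x2 hx2 hseg
      obtain ⟨u, v, hu, hv, huv, heq⟩ := hseg
      have hx1σ := hσext.2 hx1 hx2 hwσ ⟨u, v, hu, hv, huv, heq⟩
      have hx2σ := hσext.right_mem_of_mem_openSegment hx1 hx2 hwσ ⟨u, v, hu, hv, huv, heq⟩
      have hm1 : w.2 ≤ x1.2 := hwmin' _ hx1σ
      have hm2 : w.2 ≤ x2.2 := hwmin' _ hx2σ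
      have e2 : u * x1.2 + v * x2.2 = w.2 := by
        have h3 := congrArg Prod.snd heq
        simpa [Prod.snd_add, Prod.smul_snd] using h3
      have h3 : u*w.2 + v*w.2 = w.2 := by rw [← add_mul, huv, one_mul]
      have hq1 : x1.2 = w.2 := le_antisymm (by
        by_contra hc; push_neg at hc
        have h1 : u*w.2 < u*x1.2 := mul_lt_mul_of_pos_left hc hu
        have h2 : v*w.2 ≤ v*x2.2 := mul_le_mul_of_nonneg_left hm2 hv.le
        linarith) hm1
      have hq2 : x2.2 = w.2 := le_antisymm (by
        by_contra hc; push_neg at hc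
        have h1 : v*w.2 < v*x2.2 := mul_lt_mul_of_pos_left hc hv
        have h2 : u*w.2 ≤ u*x1.2 := mul_le_mul_of_nonneg_left hm1 hu.le
        linarith) hm2
      exact Prod.ext (by rw [hx1σ.2, hwσ.2]) hq1
    have hwlow : w.2 ≤ -a := hwmin' _ hmσ
    rcases hextreme w hwext with h | h | h
    · exfalso; rw [h] at hwlow; have h2 : (0:ℝ) ≤ -a := hwlow; linarith
    · exfalso
      have h3 : w.1 = 0 := hwσ.2
      rw [h] at h3; have h4 : s + t = 0 := h3; linarith
    · rw [← h]; exact hwσ.1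
  have hxst : ((s+t,0):Pt) ∈ Δ := by
    have hσext : IsExtreme ℝ Δ (Δ ∩ {p : Pt | p.2 = 0}) := by
      refine ⟨inter_subset_left, ?_⟩
      rintro x1 hx1 x2 hx2 z ⟨hzΔ, hz1⟩ ⟨u, v, hu, hv, huv, heq⟩
      have e1 : u * x1.2 + v * x2.2 = z.2 := by
        have h3 := congrArg Prod.snd heq
        simpa [Prod.snd_add, Prod.smul_snd] using h3
      have hx11 := hΔ2 x1 hx1
      have hx21 := hΔ2 x2 hx2
      have hz1' : z.2 = 0 := hz1
      have hq1 : x1.2 = 0 := le_antisymm hx11 (by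
        by_contra hc; push_neg at hc
        have h1 : u*x1.2 < 0 := mul_neg_of_pos_of_neg hu hc
        have h2 : v*x2.2 ≤ 0 := by nlinarith [mul_nonneg hv.le (neg_nonneg.2 hx21)]
        linarith)
      have hq2 : x2.2 = 0 := le_antisymm hx21 (by
        by_contra hc; push_neg at hc
        have h1 : v*x2.2 < 0 := mul_neg_of_pos_of_neg hv hc
        have h2 : u*x1.2 ≤ 0 := by nlinarith [mul_nonneg hu.le (neg_nonneg.2 hx11)]
        linarith)
      exact ⟨hx1, hq1⟩
    have hσcomp : IsCompact (Δ ∩ {p : Pt | p.2 = 0}) :=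
      hΔcomp.inter_right (isClosed_eq continuous_snd continuous_const)
    have hmσ : ((-a,0):Pt) ∈ Δ ∩ {p : Pt | p.2 = 0} := ⟨hxa, rfl⟩
    obtain ⟨w, hwσ, hwmin⟩ := hσcomp.exists_isMinOn ⟨_, hmσ⟩ continuous_fst.continuousOn
    have hwmin' := isMinOn_iff.1 hwmin
    have hwext : w ∈ Δ.extremePoints ℝ := by
      refine ⟨hwσ.1, ?_⟩
      intro x1 hx1 x2 hx2 hseg
      obtain ⟨u, v, hu, hv, huv, heq⟩ := hseg
      have hx1σ := hσext.2 hx1 hx2 hwσ ⟨u, v, hu, hv, huv, heq⟩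
      have hx2σ := hσext.right_mem_of_mem_openSegment hx1 hx2 hwσ ⟨u, v, hu, hv, huv, heq⟩
      have hm1 : w.1 ≤ x1.1 := hwmin' _ hx1σ
      have hm2 : w.1 ≤ x2.1 := hwmin' _ hx2σ
      have e2 : u * x1.1 + v * x2.1 = w.1 := by
        have h3 := congrArg Prod.fst heq
        simpa [Prod.fst_add, Prod.smul_fst] using h3
      have h3 : u*w.1 + v*w.1 = w.1 := by rw [← add_mul, huv, one_mul]
      have hq1 : x1.1 = w.1 := le_antisymm (by
        by_contra hc; push_neg at hc
        have h1 : u*w.1 < u*x1.1 := mul_lt_mul_of_pos_left hc hu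
        have h2 : v*w.1 ≤ v*x2.1 := mul_le_mul_of_nonneg_left hm2 hv.le
        linarith) hm1
      have hq2 : x2.1 = w.1 := le_antisymm (by
        by_contra hc; push_neg at hc
        have h1 : v*w.1 < v*x2.1 := mul_lt_mul_of_pos_left hc hv
        have h2 : u*w.1 ≤ u*x1.1 := mul_le_mul_of_nonneg_left hm1 hu.le
        linarith) hm2
      exact Prod.ext hq1 (by rw [hx1σ.2, hwσ.2])
    have hwlow : w.1 ≤ -a := hwmin' _ hmσ
    rcases hextreme w hwext with h | h | h
    · exfalso; rw [h] at hwlow; have h2 : (0:ℝ) ≤ -a := hwlow; linarith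
    · rw [← h]; exact hwσ.1
    · exfalso
      have h3 : w.2 = 0 := hwσ.2
      rw [h] at h3; have h4 : t = 0 := h3; linarith
  -- Krein–Milman / Minkowski: Δ is contained in the triangle
  have hKM : Δ ⊆ convexHull ℝ ({((0,0):Pt), ((s+t,0):Pt), ((0,t):Pt)} : Set Pt) := by
    have h1 : Δ.extremePoints ℝ ⊆ ({((0,0):Pt), ((s+t,0):Pt), ((0,t):Pt)} : Set Pt) := by
      intro w hw
      rcases hextreme w hw with h|h|h <;> simp [h]
    have h2 := closure_convexHull_extremePoints hΔcomp hΔconv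
    have h3 : IsClosed (convexHull ℝ ({((0,0):Pt), ((s+t,0):Pt), ((0,t):Pt)} : Set Pt)) :=
      (Set.Finite.isCompact_convexHull ℝ
        (((Set.finite_singleton _).insert _).insert _)).isClosed
    calc Δ = closure (convexHull ℝ (Δ.extremePoints ℝ)) := h2.symm
      _ ⊆ closure (convexHull ℝ ({((0,0):Pt), ((s+t,0):Pt), ((0,t):Pt)} : Set Pt)) :=
          closure_mono (convexHull_mono h1)
      _ = _ := h3.closure_eq
  -- Δ lies in the halfplane bounded by the line through (s+t,0) and (0,t)
  have hΔhalf : ∀ p ∈ Δ, t*p.1 + (s+t)*p.2 ≤ t*(s+t) := by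
    intro p hp
    have hhalfconv : Convex ℝ {q : Pt | t*q.1 + (s+t)*q.2 ≤ t*(s+t)} := by
      intro x hx y hy u v hu hv huv
      simp only [mem_setOf_eq] at hx hy ⊢
      have e1 : (u • x + v • y).1 = u*x.1 + v*y.1 := rfl
      have e2 : (u • x + v • y).2 = u*x.2 + v*y.2 := rfl
      rw [e1, e2]
      have hxu := mul_le_mul_of_nonneg_left hx hu
      have hyv := mul_le_mul_of_nonneg_left hy hv
      have hc : u*(t*(s+t)) + v*(t*(s+t)) = t*(s+t) := by rw [← add_mul, huv, one_mul]
      nlinarith [hxu, hyv, hc]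
    have hsubs : ({((0,0):Pt), ((s+t,0):Pt), ((0,t):Pt)} : Set Pt)
        ⊆ {q : Pt | t*q.1 + (s+t)*q.2 ≤ t*(s+t)} := by
      rintro q (rfl | rfl | rfl)
      · show t*(0:ℝ) + (s+t)*(0:ℝ) ≤ t*(s+t)
        nlinarith [mul_pos (neg_pos.2 ht0) (neg_pos.2 hst)]
      · show t*(s+t) + (s+t)*(0:ℝ) ≤ t*(s+t)
        nlinarith
      · show t*(0:ℝ) + (s+t)*t ≤ t*(s+t)
        nlinarith
    exact convexHull_min hsubs hhalfconv (hKM hp)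
  -- the face cut out by that line
  have hFyt : ((0,t):Pt) ∈ Δ ∩ {p : Pt | t*p.1 + (s+t)*p.2 = t*(s+t)} :=
    ⟨hyt, by show t*0 + (s+t)*t = t*(s+t); ring⟩
  have hFxst : ((s+t,0):Pt) ∈ Δ ∩ {p : Pt | t*p.1 + (s+t)*p.2 = t*(s+t)} :=
    ⟨hxst, by show t*(s+t) + (s+t)*0 = t*(s+t); ring⟩
  have hFface : IsFaceOf (Δ ∩ {p : Pt | t*p.1 + (s+t)*p.2 = t*(s+t)}) Δ := by
    refine ⟨⟨_, hFyt⟩, ?_, ⟨inter_subset_left, ?_⟩⟩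
    · intro x hx y hy u v hu hv huv
      refine ⟨hΔconv hx.1 hy.1 hu hv huv, ?_⟩
      have hx2 : t*x.1 + (s+t)*x.2 = t*(s+t) := hx.2
      have hy2 : t*y.1 + (s+t)*y.2 = t*(s+t) := hy.2
      show t*(u • x + v • y).1 + (s+t)*(u • x + v • y).2 = t*(s+t)
      have e1 : (u • x + v • y).1 = u*x.1 + v*y.1 := rfl
      have e2 : (u • x + v • y).2 = u*x.2 + v*y.2 := rfl
      rw [e1, e2]
      linear_combination u*hx2 + v*hy2 + (t*(s+t))*huv
    · rintro x1 hx1 x2 hx2 z ⟨hzΔ, hz⟩ ⟨u, v, hu, hv, huv, heq⟩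
      have b1 := hΔhalf x1 hx1
      have b2 := hΔhalf x2 hx2
      have e1 : u*x1.1 + v*x2.1 = z.1 := by
        have h3 := congrArg Prod.fst heq
        simpa [Prod.fst_add, Prod.smul_fst] using h3
      have e2 : u*x1.2 + v*x2.2 = z.2 := by
        have h3 := congrArg Prod.snd heq
        simpa [Prod.snd_add, Prod.smul_snd] using h3
      have hz' : t*z.1 + (s+t)*z.2 = t*(s+t) := hz
      have e1' : t*(u*x1.1+v*x2.1) = t*z.1 := by rw [e1]
      have e2' : (s+t)*(u*x1.2+v*x2.2) = (s+t)*z.2 := by rw [e2]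
      have hc : u*(t*(s+t)) + v*(t*(s+t)) = t*(s+t) := by rw [← add_mul, huv, one_mul]
      have hA : t*(s+t) ≤ t*x1.1 + (s+t)*x1.2 := by
        by_contra hAc; push_neg at hAc
        have h1 : u*(t*x1.1+(s+t)*x1.2) < u*(t*(s+t)) := mul_lt_mul_of_pos_left hAc hu
        have h2 : v*(t*x2.1+(s+t)*x2.2) ≤ v*(t*(s+t)) := mul_le_mul_of_nonneg_left b2 hv.le
        linarith only [h1, h2, hc, e1', e2', hz']
      have hB : t*(s+t) ≤ t*x2.1 + (s+t)*x2.2 := by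
        by_contra hBc; push_neg at hBc
        have h1 : v*(t*x2.1+(s+t)*x2.2) < v*(t*(s+t)) := mul_lt_mul_of_pos_left hBc hv
        have h2 : u*(t*x1.1+(s+t)*x1.2) ≤ u*(t*(s+t)) := mul_le_mul_of_nonneg_left b1 hu.le
        linarith only [h1, h2, hc, e1', e2', hz']
      exact ⟨hx1, le_antisymm b1 hA⟩
  obtain ⟨hmemF, hdimF, hsubF⟩ := hX _ hFface
  have hdF : setDim (Δ ∩ {p : Pt | t*p.1 + (s+t)*p.2 = t*(s+t)}) = 1 := by
    have hne : ((0,t):Pt) ≠ ((s+t,0):Pt) := by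
      intro h; have h2 : t = (0:ℝ) := congrArg Prod.snd h; linarith
    have h1 : 1 ≤ setDim (Δ ∩ {p : Pt | t*p.1 + (s+t)*p.2 = t*(s+t)}) :=
      one_le_setDim' hFyt hFxst hne
    have h2 : setDim (Δ ∩ {p : Pt | t*p.1 + (s+t)*p.2 = t*(s+t)}) ≤ 1 := by
      apply setDim_le_one' (v := ((s+t,-t):Pt)) (by
        intro h; have h3 : s+t = (0:ℝ) := congrArg Prod.fst h; linarith)
      intro p hp q hq
      refine ⟨(p.1 - q.1)/(s+t), sub_eq_smul_pt ?_ ?_⟩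
      · rw [div_mul_cancel₀ _ (ne_of_lt hst)]
      · have hp2 : t*p.1 + (s+t)*p.2 = t*(s+t) := hp.2
        have hq2 : t*q.1 + (s+t)*q.2 = t*(s+t) := hq.2
        rw [div_mul_eq_mul_div, eq_div_iff (ne_of_lt hst)]
        linear_combination hp2 - hq2
    omega
  rw [hdF] at hdimF
  have hytX : ((0,t):Pt) ∈ X (Δ ∩ {p : Pt | t*p.1 + (s+t)*p.2 = t*(s+t)}) := hsubF hFyt
  have hxstX : ((s+t,0):Pt) ∈ X (Δ ∩ {p : Pt | t*p.1 + (s+t)*p.2 = t*(s+t)}) := hsubF hFxst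
  simp only [XrayST, mem_insert_iff, mem_singleton_iff] at hmemF
  rcases hmemF with h|h|h|h|h|h|h|h|h|h|h|h|h|h|h|h
  · rw [h, setDim_singleton'] at hdimF; exact absurd hdimF (by norm_num)
  · rw [h, setDim_singleton'] at hdimF; exact absurd hdimF (by norm_num)
  · rw [h, setDim_singleton'] at hdimF; exact absurd hdimF (by norm_num)
  · rw [h, setDim_singleton'] at hdimF; exact absurd hdimF (by norm_num)
  · rw [h, setDim_singleton'] at hdimF; exact absurd hdimF (by norm_num)
  · rw [h, setDim_singleton'] at hdimF; exact absurd hdimF (by norm_num)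
  · -- segment (0,0) (0,t) : does not contain (s+t,0)
    rw [h] at hxstX
    obtain ⟨u, v, hu, hv, huv, e1, e2⟩ := seg_mem_coords hxstX
    nlinarith
  · -- segment (0,0) (s+t,0) : does not contain (0,t)
    rw [h] at hytX
    obtain ⟨u, v, hu, hv, huv, e1, e2⟩ := seg_mem_coords hytX
    nlinarith
  · -- segment (0,t) (s,t) : does not contain (s+t,0)
    rw [h] at hxstX
    obtain ⟨u, v, hu, hv, huv, e1, e2⟩ := seg_mem_coords hxstX
    nlinarith
  · -- segment (s,t) (s+t,0) : does not contain (0,t)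
    rw [h] at hytX
    obtain ⟨u, v, hu, hv, huv, e1, e2⟩ := seg_mem_coords hytX
    -- u*s + v*(s+t) = 0, u*t + v*0 = t
    have h4 : u*t = t := by linarith
    have h5 : (u-1)*t = 0 := by nlinarith
    rcases mul_eq_zero.1 h5 with h6 | h6
    · have hu1 : u = 1 := by linarith
      have hv0 : v = 0 := by linarith
      rw [hu1, hv0] at e1
      nlinarith
    · linarith
  · -- segment (0,0) (s,s) : does not contain (0,t)
    rw [h] at hytX
    obtain ⟨u, v, hu, hv, huv, e1, e2⟩ := seg_mem_coords hytX
    nlinarith [mul_nonneg hv hs.le]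
  · -- segment (s,s) (t-s,s) : does not contain (s+t,0)
    rw [h] at hxstX
    obtain ⟨u, v, hu, hv, huv, e1, e2⟩ := seg_mem_coords hxstX
    -- u*s + v*s = 0
    have h7 : u*s + v*s = s := by rw [← add_mul, huv, one_mul]
    nlinarith
  · -- segment (s,s) (s,t) : does not contain (s+t,0)
    rw [h] at hxstX
    obtain ⟨u, v, hu, hv, huv, e1, e2⟩ := seg_mem_coords hxstX
    have h7 : u*s + v*s = s := by rw [← add_mul, huv, one_mul]
    nlinarith
  · -- segment (t-s,s) (s+t,0) : does not contain (0,t)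
    rw [h] at hytX
    obtain ⟨u, v, hu, hv, huv, e1, e2⟩ := seg_mem_coords hytX
    nlinarith [mul_nonneg hu hs.le]
  · -- segment (t-s,s) (0,t) : does not contain (s+t,0)
    rw [h] at hxstX
    obtain ⟨u, v, hu, hv, huv, e1, e2⟩ := seg_mem_coords hxstX
    -- u*(t-s) + v*0 = s+t, u*s + v*t = 0, u+v = 1
    have hv' : v = 1 - u := by linarith
    rw [hv'] at e2
    nlinarith
  · rw [h, setDim_P hs ht0] at hdimF; exact absurd hdimF (by norm_num)



/-- For `0 < s` and `t < -s`, the x-ray `𝒳(s,t)` does not satisfy the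
extension criterion: there exists a strictly convex cone compatible with
`𝒳(s,t)` that does not extend to any convex polytope compatible with
`𝒳(s,t)`. -/
theorem XrayST_not_extension_criterion_of_lt_neg (s t : ℝ)
    (hs : 0 < s) (ht : t < -s) :
    (∃ (C : Set Pt) (v : Pt), IsConeWithVertex C v ∧ ContainsNoLine C ∧
      ConeCompat (XrayST s t) C v ∧
      ∀ Δ : Set Pt, IsPolytope Δ → IsExtensionOf Δ C v →
        ¬ PolyCompat (XrayST s t) Δ) ∧
    ¬ ExtensionCriterion (XrayST s t) := by
  have hA := cone_vertex
  have hB := cone_noline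
  have hC := cone_compat s t hs ht
  have hD : ∀ Δ : Set Pt, IsPolytope Δ → IsExtensionOf Δ Cq ((0,0):Pt) →
      ¬ PolyCompat (XrayST s t) Δ := fun Δ h1 h2 => no_compat_ext s t hs ht Δ h1 h2
  refine ⟨⟨Cq, ((0,0):Pt), hA, hB, hC, hD⟩, ?_⟩
  intro hE
  obtain ⟨Δ, h1, h2, h3⟩ := hE Cq ((0,0):Pt) hA hB hC
  exact hD Δ h1 h2 h3
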